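/- For every real number λ and all positive integers n and m, the number K^{(m)}_{n,λ} := Σ_{j=1}^{n} (1/j) Σ_{k=1}^{j} C(j,k) ((-1)^{k-1}/k^{m-1}) binom(λ+k-1, k-1) satisfies K^{(m)}_{n,λ} = Σ_{1 ≤ k_1 ≤ k_2 ≤ ⋯ ≤ k_m ≤ n} ((-1)^{k_1 - 1}/(k_1 k_2 ⋯ k_m)) binom(λ-1, k_1 - 1), where the right-hand sum is over all weakly increasing m-tuples (k_1, …, k_m) of positive integers with k_m ≤ n. -/

import Mathlib

/-- Generalized binomial coefficient `binom(x, k) = x (x-1) ⋯ (x-k+1) / k!` for real `x`. -/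
noncomputable def rchoose (x : ℝ) (k : ℕ) : ℝ :=
  (∏ i ∈ Finset.range k, (x - i)) / (Nat.factorial k)

/-- The numbers `K^{(m)}_{n,λ} = ∑_{j=1}^n (1/j) ∑_{k=1}^j C(j,k) ((-1)^{k-1}/k^{m-1})
binom(λ+k-1, k-1)`. -/
noncomputable def Kdeg (lam : ℝ) (m n : ℕ) : ℝ :=
  ∑ j ∈ Finset.Icc 1 n, (1 / (j : ℝ)) *
    ∑ k ∈ Finset.Icc 1 j,
      (j.choose k : ℝ) * ((-1) ^ (k - 1) / (k : ℝ) ^ (m - 1)) * rchoose (lam + k - 1) (k - 1)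

/-!
Upper negation, `(-1)^(k-1) binom(λ+k-1, k-1) = binom(-λ-1, k-1)`, turns the inner sum of
`K^{(1)}_{j,λ}` into a Chu–Vandermonde convolution, whence
`K^{(1)}_{n,λ} = ∑_{j ≤ n} (-1)^(j-1) binom(λ-1, j-1) / j`. The hockey-stick identity
`∑_{i ≤ j} C(i,k)/i = C(j,k)/k` gives the recursion `K^{(m+1)}_{n,λ} = ∑_{j ≤ n} K^{(m)}_{j,λ} / j`,
and unrolling it along the largest index `k_m` produces the multiple sum.
-/

open Finset

lemma rchoose_eq_ringChoose (x : ℝ) (k : ℕ) : rchoose x k = Ring.choose x k := by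
  rw [Ring.choose_eq_smul, ← Polynomial.aeval_eq_smeval, ← Polynomial.eval_map_algebraMap,
    descPochhammer_map, descPochhammer_eval_eq_prod_range, rchoose, smul_eq_mul, div_eq_inv_mul]

section Binomial

variable {K : Type*} [Field K] [CharZero K]

lemma Ring.choose_neg_eq_neg_one_pow_mul (r : K) (n : ℕ) :
    Ring.choose (-r) n = (-1) ^ n * Ring.choose (r + n - 1) n := by
  rw [Ring.choose_neg, Units.smul_def, zsmul_eq_mul, Int.cast_negOnePow, zpow_natCast]

lemma Ring.sum_range_natChoose_succ_mul_choose (r : K) (s : ℕ) :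
    ∑ i ∈ range (s + 1), ((s + 1).choose (i + 1) : K) * Ring.choose r i
      = Ring.choose (r + (s + 1 : ℕ)) s := by
  rw [Ring.add_choose_eq s (Commute.all _ _),
    Nat.sum_antidiagonal_eq_sum_range_succ (fun a b => Ring.choose r a * Ring.choose _ b)]
  refine sum_congr rfl fun i hi => ?_
  rw [Ring.choose_natCast, mul_comm,
    Nat.choose_symm_of_eq_add (by have := mem_range.mp hi; omega : s + 1 = (s - i) + (i + 1))]

lemma Ring.sum_range_natChoose_succ_mul_neg_one_pow_mul_choose (r : K) (s : ℕ) :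
    ∑ i ∈ range (s + 1), ((s + 1).choose (i + 1) : K) * ((-1) ^ i * Ring.choose (r + i) i)
      = (-1) ^ s * Ring.choose (r - 1) s := by
  have upper_neg (i : ℕ) : (-1) ^ i * Ring.choose (r + i) i = Ring.choose (-r - 1) i := by
    rw [← neg_add', Ring.choose_neg_eq_neg_one_pow_mul, add_sub_right_comm, add_sub_cancel_right]
  simp only [upper_neg]
  rw [Ring.sum_range_natChoose_succ_mul_choose,
    show -r - 1 + ((s + 1 : ℕ) : K) = -(r - s) by push_cast; ring,
    Ring.choose_neg_eq_neg_one_pow_mul, sub_add_cancel]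

lemma sum_Icc_choose_div (j : ℕ) {k : ℕ} (hk : k ≠ 0) :
    ∑ i ∈ Icc 1 j, (i.choose k : K) / i = (j.choose k : K) / k := by
  obtain ⟨k, rfl⟩ : ∃ k', k = k' + 1 := ⟨k - 1, by omega⟩
  induction j with
  | zero => simp
  | succ j ih =>
    rw [sum_Icc_succ_top (by omega), ih]
    have pascal : ((j + 1).choose (k + 1) : K) = j.choose k + j.choose (k + 1) := by
      exact_mod_cast Nat.choose_succ_succ' j k
    have absorb : ((j + 1 : ℕ) : K) * j.choose k = (j + 1).choose (k + 1) * (k + 1 : ℕ) := by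
      exact_mod_cast Nat.add_one_mul_choose_eq j k
    field_simp
    push_cast at absorb ⊢
    linear_combination -absorb - (j + 1 : K) * pascal

lemma sum_Icc_one_div_mul_sum_choose_mul (g : ℕ → K) (j : ℕ) :
    ∑ i ∈ Icc 1 j, 1 / (i : K) * ∑ k ∈ Icc 1 i, (i.choose k : K) * g k
      = ∑ k ∈ Icc 1 j, (j.choose k : K) / k * g k := by
  have extend : ∀ i ∈ Icc 1 j, ∑ k ∈ Icc 1 i, (i.choose k : K) * g k
      = ∑ k ∈ Icc 1 j, (i.choose k : K) * g k := by
    intro i hi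
    refine sum_subset (Icc_subset_Icc_right (mem_Icc.mp hi).2) fun k _ hk => ?_
    rw [Nat.choose_eq_zero_of_lt (by simp_all), Nat.cast_zero, zero_mul]
  rw [sum_congr rfl fun i hi => by rw [extend i hi, mul_sum], sum_comm]
  refine sum_congr rfl fun k hk => ?_
  rw [← sum_Icc_choose_div j (by have := (mem_Icc.mp hk).1; omega), sum_mul]
  exact sum_congr rfl fun i _ => by ring

end Binomial

lemma Kdeg_one (lam : ℝ) (n : ℕ) :
    Kdeg lam 1 n = ∑ j ∈ Icc 1 n, (-1) ^ (j - 1) / (j : ℝ) * rchoose (lam - 1) (j - 1) := by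
  unfold Kdeg
  refine sum_congr rfl fun j hj => ?_
  obtain ⟨s, rfl⟩ : ∃ s, j = s + 1 := ⟨j - 1, by have := (mem_Icc.mp hj).1; omega⟩
  have inner : ∑ k ∈ Icc 1 (s + 1), ((s + 1).choose k : ℝ) * ((-1) ^ (k - 1) / (k : ℝ) ^ (1 - 1))
      * rchoose (lam + k - 1) (k - 1) = (-1) ^ s * Ring.choose (lam - 1) s := by
    rw [← Ico_add_one_right_eq_Icc, sum_Ico_eq_sum_range,
      ← Ring.sum_range_natChoose_succ_mul_neg_one_pow_mul_choose]
    refine sum_congr rfl fun i _ => ?_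
    simp only [add_comm 1 i, Nat.add_sub_cancel, Nat.sub_self, pow_zero, div_one,
      Nat.cast_add_one, ← add_assoc, add_sub_cancel_right, rchoose_eq_ringChoose, mul_assoc]
  rw [inner, rchoose_eq_ringChoose, Nat.add_sub_cancel]
  ring

lemma Kdeg_add_two (lam : ℝ) (m n : ℕ) :
    Kdeg lam (m + 2) n = ∑ j ∈ Icc 1 n, 1 / (j : ℝ) * Kdeg lam (m + 1) j := by
  unfold Kdeg
  refine sum_congr rfl fun j _ => ?_
  simp only [add_tsub_cancel_right, mul_assoc]
  rw [sum_Icc_one_div_mul_sum_choose_mul]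
  congr 1
  refine sum_congr rfl fun k _ => ?_
  rw [show m + 2 - 1 = m + 1 by omega, pow_succ]
  ring

lemma Fin.monotone_snoc_iff {α : Type*} [Preorder α] {m : ℕ} {s : Fin m → α} {a : α} :
    Monotone (Fin.snoc s a : Fin (m + 1) → α) ↔ Monotone s ∧ ∀ i, s i ≤ a := by
  refine ⟨fun h => ⟨fun i i' hi => ?_, fun i => ?_⟩, fun ⟨hs, ha⟩ i i' hi => ?_⟩
  · simpa using h (Fin.castSucc_le_castSucc_iff.mpr hi)
  · simpa using h (Fin.le_last (Fin.castSucc i))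
  · induction i' using Fin.lastCases with
    | last =>
      induction i using Fin.lastCases with
      | last => exact le_rfl
      | cast i => simpa using ha i
    | cast i' =>
      induction i using Fin.lastCases with
      | last => exact absurd hi (not_le.mpr (Fin.castSucc_lt_last i'))
      | cast i => simpa using hs (Fin.castSucc_le_castSucc_iff.mp hi)

def monotoneTuples (m a b : ℕ) : Finset (Fin m → ℕ) :=
  {t ∈ Fintype.piFinset fun _ => Icc a b | ∀ i j : Fin m, i ≤ j → t i ≤ t j}

lemma mem_monotoneTuples {m a b : ℕ} {t : Fin m → ℕ} :
    t ∈ monotoneTuples m a b ↔ Monotone t ∧ ∀ i, t i ∈ Icc a b := by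
  simp only [monotoneTuples, mem_filter, Fintype.mem_piFinset, and_comm, Monotone]

lemma snoc_mem_monotoneTuples_iff {m a b j : ℕ} {s : Fin m → ℕ} :
    (Fin.snoc s j : Fin (m + 1) → ℕ) ∈ monotoneTuples (m + 1) a b ↔
      j ∈ Icc a b ∧ s ∈ monotoneTuples m a j := by
  simp only [mem_monotoneTuples, Fin.monotone_snoc_iff, Fin.forall_fin_succ', Fin.snoc_castSucc,
    Fin.snoc_last, mem_Icc]
  grind

lemma monotoneTuples_zero (a b : ℕ) : monotoneTuples 0 a b = univ :=
  eq_univ_of_forall fun _ => mem_monotoneTuples.mpr ⟨fun i => i.elim0, fun i => i.elim0⟩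

lemma sum_monotoneTuples_succ {M : Type*} [AddCommMonoid M] (m a b : ℕ)
    (f : (Fin (m + 1) → ℕ) → M) :
    ∑ t ∈ monotoneTuples (m + 1) a b, f t =
      ∑ j ∈ Icc a b, ∑ s ∈ monotoneTuples m a j, f (Fin.snoc s j) := by
  rw [sum_sigma']
  refine sum_nbij' (fun t => ⟨t (Fin.last m), Fin.init t⟩) (fun p => Fin.snoc p.2 p.1)
    (fun t ht => ?_) (fun p hp => ?_) (fun t _ => Fin.snoc_init_self t) (fun p _ => ?_)
    (fun t _ => by rw [Fin.snoc_init_self])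
  · rw [← Fin.snoc_init_self t, snoc_mem_monotoneTuples_iff] at ht
    simpa using ht
  · exact snoc_mem_monotoneTuples_iff.mpr (by simpa using hp)
  · simp

lemma Kdeg_succ_eq_sum_monotoneTuples (lam : ℝ) (m n : ℕ) :
    Kdeg lam (m + 1) n = ∑ t ∈ monotoneTuples (m + 1) 1 n,
      (-1 : ℝ) ^ (t 0 - 1) / (∏ i, (t i : ℝ)) * rchoose (lam - 1) (t 0 - 1) := by
  induction m generalizing n with
  | zero =>
    rw [Kdeg_one, sum_monotoneTuples_succ]
    simp [monotoneTuples_zero, Fin.snoc_zero]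
  | succ m ih =>
    rw [Kdeg_add_two, sum_monotoneTuples_succ]
    refine sum_congr rfl fun j _ => ?_
    rw [ih, mul_sum]
    refine sum_congr rfl fun s _ => ?_
    have head : (Fin.snoc s j : Fin (m + 2) → ℕ) 0 = s 0 := Fin.snoc_castSucc (i := 0) ..
    have prod : ∏ i, ((Fin.snoc s j : Fin (m + 2) → ℕ) i : ℝ) = (∏ i, (s i : ℝ)) * j := by
      simp [Fin.prod_univ_castSucc]
    rw [head, prod]
    ring

theorem Kdeg_eq_multiple_sum_general (lam : ℝ) (n m : ℕ) (hm : 0 < m) :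
    Kdeg lam m n =
      ∑ t ∈ Finset.filter (fun t : Fin m → ℕ => ∀ i j : Fin m, i ≤ j → t i ≤ t j)
          (Fintype.piFinset fun _ : Fin m => Finset.Icc 1 n),
        (-1 : ℝ) ^ (t ⟨0, hm⟩ - 1) / (∏ i, (t i : ℝ)) * rchoose (lam - 1) (t ⟨0, hm⟩ - 1) := by
  obtain ⟨m, rfl⟩ := Nat.exists_eq_add_one_of_ne_zero hm.ne'
  -- the filtered `piFinset` is `monotoneTuples (m + 1) 1 n` unfolded, and `⟨0, hm⟩` is `0`
  exact Kdeg_succ_eq_sum_monotoneTuples lam m n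

theorem Kdeg_eq_multiple_sum (lam : ℝ) (n m : ℕ) (hn : 1 ≤ n) (hm : 0 < m) :
    Kdeg lam m n =
      ∑ t ∈ Finset.filter (fun t : Fin m → ℕ => ∀ i j : Fin m, i ≤ j → t i ≤ t j)
          (Fintype.piFinset fun _ : Fin m => Finset.Icc 1 n),
        (-1 : ℝ) ^ (t ⟨0, hm⟩ - 1) / (∏ i, (t i : ℝ)) * rchoose (lam - 1) (t ⟨0, hm⟩ - 1) :=
  Kdeg_eq_multiple_sum_general lam n m hm
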